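/- Let d, N ≥ 1, α, β, ε > 0, let f : ℝ^d → ℝ be continuous, nonnegative, and Lipschitz continuous on every ball B_n = {x : |x| ≤ n} with constant L_f = L_f(n), and let H^ε : ℝ → ℝ satisfy 0 ≤ H^ε ≤ 1 and |H^ε(x) − H^ε(y)| ≤ (C/ε)|x − y| for some C > 0. Define, for a continuous path φ : [0,∞) → (ℝ^d)^N, the coefficients λ^{ε,i}(t,φ) = H^ε(f(φ^i(t)) − f(v_f[φ(t)])) · H^ε(f(p_f[φ^i](t)) − f(v_f[φ(t)])) and μ^{ε,i}(t,φ) = H^ε(f(φ^i(t)) − f(p_f[φ^i](t))) · H^ε(f(v_f[φ(t)]) − f(p_f[φ^i](t))), and the drift b(t,φ) ∈ (ℝ^d)^N blockwise by b^i(t,φ) = −λ^{ε,i}(t,φ)(φ^i(t) − v_f[φ(t)]) − μ^{ε,i}(t,φ)(φ^i(t) − p_f[φ^i](t)). Then for every R > 0 there exists a constant L_R > 0 (depending on d, N, α, β, ε, C, R, L_f(R), and the extrema of f on B_R) such that for all t ≥ 0 and all continuous φ, ψ : [0,∞) → (ℝ^d)^N with ‖φ‖_t ≤ R and ‖ψ‖_t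 ≤ R one has |b(t,φ) − b(t,ψ)| ≤ L_R ‖φ − ψ‖_t, where ‖φ‖_t = sup_{0≤s≤t}|φ(s)|. -/

import Mathlib

open scoped BigOperators

/-- The weighted average `v_f[x]` used in consensus-based optimization. -/
noncomputable def weightedAvg {d N : ℕ} (α : ℝ) (f : EuclideanSpace ℝ (Fin d) → ℝ)
    (x : Fin N → EuclideanSpace ℝ (Fin d)) : EuclideanSpace ℝ (Fin d) :=
  (∑ i, Real.exp (-(α * f (x i))))⁻¹ • ∑ i, Real.exp (-(α * f (x i))) • x i

/-- The weighted personal best `p_f[φ](t)` along a path `φ`. -/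
noncomputable def personalBest {d : ℕ} (β : ℝ) (f : EuclideanSpace ℝ (Fin d) → ℝ)
    (φ : ℝ → EuclideanSpace ℝ (Fin d)) (t : ℝ) : EuclideanSpace ℝ (Fin d) :=
  if t = 0 then φ 0
  else (∫ s in (0:ℝ)..t, Real.exp (-(β * f (φ s))))⁻¹ •
    ∫ s in (0:ℝ)..t, Real.exp (-(β * f (φ s))) • φ s

/-- The smoothed coefficient `λ^{ε,i}(t,φ)`. -/
noncomputable def lamEps {d N : ℕ} (α β : ℝ) (f : EuclideanSpace ℝ (Fin d) → ℝ)
    (He : ℝ → ℝ) (i : Fin N) (t : ℝ) (φ : ℝ → Fin N → EuclideanSpace ℝ (Fin d)) : ℝ :=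
  He (f (φ t i) - f (weightedAvg α f (φ t))) *
    He (f (personalBest β f (fun s => φ s i) t) - f (weightedAvg α f (φ t)))

/-- The smoothed coefficient `μ^{ε,i}(t,φ)`. -/
noncomputable def muEps {d N : ℕ} (α β : ℝ) (f : EuclideanSpace ℝ (Fin d) → ℝ)
    (He : ℝ → ℝ) (i : Fin N) (t : ℝ) (φ : ℝ → Fin N → EuclideanSpace ℝ (Fin d)) : ℝ :=
  He (f (φ t i) - f (personalBest β f (fun s => φ s i) t)) *
    He (f (weightedAvg α f (φ t)) - f (personalBest β f (fun s => φ s i) t))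

/-- The `i`-th block of the drift `b(t,φ)`. -/
noncomputable def driftB {d N : ℕ} (α β : ℝ) (f : EuclideanSpace ℝ (Fin d) → ℝ)
    (He : ℝ → ℝ) (i : Fin N) (t : ℝ) (φ : ℝ → Fin N → EuclideanSpace ℝ (Fin d)) :
    EuclideanSpace ℝ (Fin d) :=
  -(lamEps α β f He i t φ) • (φ t i - weightedAvg α f (φ t))
    - (muEps α β f He i t φ) • (φ t i - personalBest β f (fun s => φ s i) t)

/-! Both averages are Gibbs means `(∫ w dμ)⁻¹ ∫ w g dμ` with weight `w = exp (-β f ∘ g)`: `v_f` for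
the counting measure on the particles, `p_f[ψ](t)` for Lebesgue measure on `(0, t]` (the Dirac mass
at `0` when `t = 0`). On the ball of radius `R` the weights lie in `[exp (-β M), 1]`, with `M` a
bound for `f` there, and are `β L_f`-Lipschitz functions of the point, so a Gibbs mean of paths in
the ball stays in the ball and is Lipschitz in the path, with a constant independent of the total
mass of the measure. The drift is built from these means, `f` and the bounded Lipschitz function
`H^ε` by sums and products, hence is Lipschitz on the ball as well. -/

open MeasureTheory Metric Set Real
open scoped NNReal

theorem abs_exp_sub_exp_le_of_nonpos {u v : ℝ} (hu : u ≤ 0) (hv : v ≤ 0) :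
    |exp u - exp v| ≤ |u - v| := by
  wlog h : v ≤ u generalizing u v
  · rw [abs_sub_comm, abs_sub_comm u v]
    exact this hv hu (le_of_not_ge h)
  have hexp : exp v = exp (v - u) * exp u := by rw [← exp_add, sub_add_cancel]
  have h1 : v - u + 1 ≤ exp (v - u) := add_one_le_exp _
  have h2 : exp u ≤ 1 := exp_le_one_iff.mpr hu
  rw [abs_of_nonneg (sub_nonneg.2 (exp_le_exp.2 h)), abs_of_nonneg (sub_nonneg.2 h)]
  nlinarith [exp_pos u]

theorem abs_exp_neg_mul_sub_exp_neg_mul_le {β y z : ℝ} (hβ : 0 ≤ β) (hy : 0 ≤ y) (hz : 0 ≤ z) :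
    |exp (-(β * y)) - exp (-(β * z))| ≤ β * |y - z| := by
  calc |exp (-(β * y)) - exp (-(β * z))| ≤ |-(β * y) - -(β * z)| :=
        abs_exp_sub_exp_le_of_nonpos (by nlinarith) (by nlinarith)
    _ = β * |y - z| := by
        rw [show -(β * y) - -(β * z) = β * (z - y) by ring, abs_mul, abs_of_nonneg hβ,
          abs_sub_comm]

theorem abs_mul_sub_mul_le {a b a' b' : ℝ} (hb : |b| ≤ 1) (ha' : |a'| ≤ 1) :
    |a * b - a' * b'| ≤ |a - a'| + |b - b'| := by
  calc |a * b - a' * b'| = |(a - a') * b + a' * (b - b')| := by ring_nf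
    _ ≤ |a - a'| * |b| + |a'| * |b - b'| := by
        rw [← abs_mul, ← abs_mul]
        exact abs_add_le _ _
    _ ≤ |a - a'| + |b - b'| :=
        add_le_add (mul_le_of_le_one_right (abs_nonneg _) hb)
          (mul_le_of_le_one_left (abs_nonneg _) ha')

section NormedSpace

variable {E : Type*} [SeminormedAddCommGroup E] [NormedSpace ℝ E]

theorem norm_smul_sub_smul_le (a b : ℝ) (x y : E) :
    ‖a • x - b • y‖ ≤ |a - b| * ‖x‖ + |b| * ‖x - y‖ := by
  have h : a • x - b • y = (a - b) • x + b • (x - y) := by module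
  rw [h, ← Real.norm_eq_abs, ← Real.norm_eq_abs, ← norm_smul, ← norm_smul]
  exact norm_add_le _ _

theorem norm_inv_smul_sub_inv_smul_le {a b m A B c : ℝ} {x y : E} (hm : 0 < m) (ha : m ≤ a)
    (hb : m ≤ b) (hxy : ‖x - y‖ ≤ A) (hab : |a - b| ≤ B) (hy : ‖y‖ ≤ c) :
    ‖a⁻¹ • x - b⁻¹ • y‖ ≤ A / m + B * c / m ^ 2 := by
  have ha0 := hm.trans_le ha
  have hb0 := hm.trans_le hb
  have hinv : |b⁻¹ - a⁻¹| ≤ B / m ^ 2 := by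
    rw [inv_sub_inv hb0.ne' ha0.ne', abs_div, abs_of_pos (mul_pos hb0 ha0), sq]
    exact div_le_div₀ ((abs_nonneg _).trans hab) hab (mul_pos hm hm)
      (mul_le_mul hb ha hm.le hb0.le)
  calc ‖a⁻¹ • x - b⁻¹ • y‖ = ‖b⁻¹ • y - a⁻¹ • x‖ := norm_sub_rev _ _
    _ ≤ |b⁻¹ - a⁻¹| * ‖y‖ + |a⁻¹| * ‖y - x‖ := norm_smul_sub_smul_le _ _ _ _
    _ ≤ B / m ^ 2 * c + m⁻¹ * A := by
        have hB : 0 ≤ B := (abs_nonneg _).trans hab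
        rw [abs_of_pos (inv_pos.2 ha0), norm_sub_rev]
        gcongr
    _ = A / m + B * c / m ^ 2 := by ring

end NormedSpace

section GibbsMean

variable {X E : Type*} [MeasurableSpace X] [NormedAddCommGroup E] {μ : Measure X} {β R M : ℝ}
  {K : ℝ≥0} {f : E → ℝ} {g h : X → E}

theorem integrable_exp_neg_mul_comp [IsFiniteMeasure μ] (hβ : 0 ≤ β) (hf : Continuous f)
    (hf0 : ∀ x ∈ closedBall (0 : E) R, 0 ≤ f x) (hg : AEStronglyMeasurable g μ)
    (hgR : ∀ᵐ s ∂μ, g s ∈ closedBall 0 R) :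
    Integrable (fun s => exp (-(β * f (g s)))) μ := by
  refine .of_bound (by fun_prop) 1 ?_
  filter_upwards [hgR] with s hs
  rw [norm_of_nonneg (exp_pos _).le, exp_le_one_iff, neg_nonpos]
  exact mul_nonneg hβ (hf0 _ hs)

variable [NormedSpace ℝ E]

noncomputable def gibbsMean (μ : Measure X) (β : ℝ) (f : E → ℝ) (g : X → E) : E :=
  (∫ s, exp (-(β * f (g s))) ∂μ)⁻¹ • ∫ s, exp (-(β * f (g s))) • g s ∂μ

-- `(1 + β K R) / m + β K R / m ^ 2`, where `m = exp (-β M)` bounds the Gibbs weights from below.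
noncomputable def gibbsLipschitzConst (β M R : ℝ) (K : ℝ≥0) : ℝ :=
  exp (β * M) * (1 + β * K * R) + β * K * R * exp (β * M) ^ 2

theorem gibbsLipschitzConst_nonneg (hβ : 0 ≤ β) (hR : 0 ≤ R) :
    0 ≤ gibbsLipschitzConst β M R K := by
  unfold gibbsLipschitzConst
  positivity

theorem norm_inv_integral_smul_sub_le [IsFiniteMeasure μ] [NeZero μ] {wg wh : X → ℝ}
    {c ℓ D : ℝ} (hc : 0 < c) (hwg : Integrable wg μ) (hwh : Integrable wh μ)
    (hg : AEStronglyMeasurable g μ) (hh : AEStronglyMeasurable h μ)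
    (hwg_mem : ∀ᵐ s ∂μ, wg s ∈ Icc c 1) (hwh_mem : ∀ᵐ s ∂μ, wh s ∈ Icc c 1)
    (hw : ∀ᵐ s ∂μ, |wg s - wh s| ≤ ℓ * D) (hgR : ∀ᵐ s ∂μ, ‖g s‖ ≤ R)
    (hhR : ∀ᵐ s ∂μ, ‖h s‖ ≤ R) (hgh : ∀ᵐ s ∂μ, ‖g s - h s‖ ≤ D) :
    ‖(∫ s, wg s ∂μ)⁻¹ • ∫ s, wg s • g s ∂μ - (∫ s, wh s ∂μ)⁻¹ • ∫ s, wh s • h s ∂μ‖ ≤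
      ((1 + ℓ * R) / c + ℓ * R / c ^ 2) * D := by
  have hm : 0 < μ.real univ := measureReal_univ_pos
  have hlow : ∀ {w : X → ℝ}, Integrable w μ → (∀ᵐ s ∂μ, w s ∈ Icc c 1) →
      μ.real univ * c ≤ ∫ s, w s ∂μ := fun hw hw_mem => by
    rw [← smul_eq_mul, ← integral_const]
    exact integral_mono_ae (integrable_const c) hw (hw_mem.mono fun s hs => hs.1)
  have hsmul : ∀ {w : X → ℝ} {u : X → E}, (∀ᵐ s ∂μ, w s ∈ Icc c 1) →
      (∀ᵐ s ∂μ, ‖u s‖ ≤ R) → ∀ᵐ s ∂μ, ‖w s • u s‖ ≤ R := fun hw_mem huR => by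
    filter_upwards [hw_mem, huR] with s hws hus
    rw [norm_smul, norm_of_nonneg (hc.le.trans hws.1)]
    exact (mul_le_of_le_one_left (norm_nonneg _) hws.2).trans hus
  have hwgg : Integrable (fun s => wg s • g s) μ :=
    Integrable.of_bound (hwg.aestronglyMeasurable.smul hg) R (hsmul hwg_mem hgR)
  have hwhh : Integrable (fun s => wh s • h s) μ :=
    Integrable.of_bound (hwh.aestronglyMeasurable.smul hh) R (hsmul hwh_mem hhR)
  have hT : ‖∫ s, wg s • g s ∂μ - ∫ s, wh s • h s ∂μ‖ ≤ (1 + ℓ * R) * D * μ.real univ := by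
    rw [← integral_sub hwgg hwhh]
    refine norm_integral_le_of_norm_le_const ?_
    filter_upwards [hwh_mem, hw, hgR, hgh] with s hws hws' hgs hghs
    calc ‖wg s • g s - wh s • h s‖ ≤ |wg s - wh s| * ‖g s‖ + |wh s| * ‖g s - h s‖ :=
          norm_smul_sub_smul_le _ _ _ _
      _ ≤ ℓ * D * R + 1 * D := by
          rw [abs_of_nonneg (hc.le.trans hws.1)]
          gcongr
          exacts [(abs_nonneg _).trans hws', hws.2]
      _ = (1 + ℓ * R) * D := by ring
  have hS : |∫ s, wg s ∂μ - ∫ s, wh s ∂μ| ≤ ℓ * D * μ.real univ := by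
    rw [← integral_sub hwg hwh, ← Real.norm_eq_abs]
    exact norm_integral_le_of_norm_le_const (by simpa only [Real.norm_eq_abs] using hw)
  have hTh : ‖∫ s, wh s • h s ∂μ‖ ≤ R * μ.real univ :=
    norm_integral_le_of_norm_le_const (hsmul hwh_mem hhR)
  calc _ ≤ (1 + ℓ * R) * D * μ.real univ / (μ.real univ * c)
        + ℓ * D * μ.real univ * (R * μ.real univ) / (μ.real univ * c) ^ 2 :=
        norm_inv_smul_sub_inv_smul_le (by positivity) (hlow hwg hwg_mem) (hlow hwh hwh_mem) hT hS
          hTh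
    _ = ((1 + ℓ * R) / c + ℓ * R / c ^ 2) * D := by field_simp

theorem gibbsMean_mem_closedBall [IsFiniteMeasure μ] [NeZero μ] (hβ : 0 ≤ β)
    (hf : Continuous f) (hf0 : ∀ x ∈ closedBall (0 : E) R, 0 ≤ f x)
    (hg : AEStronglyMeasurable g μ) (hgR : ∀ᵐ s ∂μ, g s ∈ closedBall 0 R) :
    gibbsMean μ β f g ∈ closedBall 0 R := by
  have hw := integrable_exp_neg_mul_comp hβ hf hf0 hg hgR
  have hZ : 0 < ∫ s, exp (-(β * f (g s))) ∂μ := integral_exp_pos hw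
  have hT : ‖∫ s, exp (-(β * f (g s))) • g s ∂μ‖ ≤ (∫ s, exp (-(β * f (g s))) ∂μ) * R := by
    rw [← integral_mul_const]
    refine norm_integral_le_of_norm_le (hw.mul_const R) ?_
    filter_upwards [hgR] with s hs
    rw [norm_smul, norm_of_nonneg (exp_pos _).le]
    exact mul_le_mul_of_nonneg_left (mem_closedBall_zero_iff.1 hs) (exp_pos _).le
  rw [mem_closedBall_zero_iff, gibbsMean, norm_smul, norm_inv, norm_of_nonneg hZ.le]
  exact (inv_mul_le_iff₀ hZ).2 hT

theorem norm_gibbsMean_sub_le [IsFiniteMeasure μ] [NeZero μ] {D : ℝ} (hβ : 0 ≤ β)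
    (hf : Continuous f) (hf0 : ∀ x ∈ closedBall (0 : E) R, 0 ≤ f x)
    (hfM : ∀ x ∈ closedBall (0 : E) R, f x ≤ M) (hfK : LipschitzOnWith K f (closedBall 0 R))
    (hg : AEStronglyMeasurable g μ) (hh : AEStronglyMeasurable h μ)
    (hgR : ∀ᵐ s ∂μ, g s ∈ closedBall 0 R) (hhR : ∀ᵐ s ∂μ, h s ∈ closedBall 0 R)
    (hgh : ∀ᵐ s ∂μ, ‖g s - h s‖ ≤ D) :
    ‖gibbsMean μ β f g - gibbsMean μ β f h‖ ≤ gibbsLipschitzConst β M R K * D := by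
  have hw_mem : ∀ {u : X → E}, (∀ᵐ s ∂μ, u s ∈ closedBall 0 R) →
      ∀ᵐ s ∂μ, exp (-(β * f (u s))) ∈ Icc (exp (-(β * M))) 1 := fun huR => by
    filter_upwards [huR] with s hs
    exact ⟨exp_le_exp.2 (neg_le_neg (mul_le_mul_of_nonneg_left (hfM _ hs) hβ)),
      exp_le_one_iff.2 (neg_nonpos.2 (mul_nonneg hβ (hf0 _ hs)))⟩
  have hw : ∀ᵐ s ∂μ, |exp (-(β * f (g s))) - exp (-(β * f (h s)))| ≤ β * K * D := by
    filter_upwards [hgR, hhR, hgh] with s hgs hhs hghs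
    calc |exp (-(β * f (g s))) - exp (-(β * f (h s)))| ≤ β * |f (g s) - f (h s)| :=
          abs_exp_neg_mul_sub_exp_neg_mul_le hβ (hf0 _ hgs) (hf0 _ hhs)
      _ ≤ β * (K * ‖g s - h s‖) := by
          rw [← Real.dist_eq, ← dist_eq_norm]
          exact mul_le_mul_of_nonneg_left (hfK.dist_le_mul _ hgs _ hhs) hβ
      _ ≤ β * K * D := by rw [← mul_assoc]; gcongr
  have key := norm_inv_integral_smul_sub_le (exp_pos _)
    (integrable_exp_neg_mul_comp hβ hf hf0 hg hgR) (integrable_exp_neg_mul_comp hβ hf hf0 hh hhR)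
    hg hh (hw_mem hgR) (hw_mem hhR) hw (hgR.mono fun _ => mem_closedBall_zero_iff.1)
    (hhR.mono fun _ => mem_closedBall_zero_iff.1) hgh
  rw [exp_neg] at key
  rw [gibbsMean, gibbsMean, gibbsLipschitzConst]
  convert key using 2
  field_simp

end GibbsMean

section Averages

variable {d : ℕ} {β R M t : ℝ} {K : ℝ≥0} {f : EuclideanSpace ℝ (Fin d) → ℝ}

theorem weightedAvg_eq_gibbsMean {N : ℕ} (α : ℝ) (x : Fin N → EuclideanSpace ℝ (Fin d)) :
    weightedAvg α f x = gibbsMean Measure.count α f x := by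
  simp [weightedAvg, gibbsMean]

theorem weightedAvg_mem_closedBall {N : ℕ} [NeZero N] {α : ℝ} (hα : 0 ≤ α) (hf : Continuous f)
    (hf0 : ∀ x ∈ closedBall 0 R, 0 ≤ f x) {x : Fin N → EuclideanSpace ℝ (Fin d)}
    (hx : ∀ i, x i ∈ closedBall 0 R) :
    weightedAvg α f x ∈ closedBall 0 R := by
  rw [weightedAvg_eq_gibbsMean]
  exact gibbsMean_mem_closedBall hα hf hf0 (by fun_prop) (.of_forall hx)

theorem norm_weightedAvg_sub_le {N : ℕ} [NeZero N] {α D : ℝ} (hα : 0 ≤ α) (hf : Continuous f)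
    (hf0 : ∀ x ∈ closedBall 0 R, 0 ≤ f x) (hfM : ∀ x ∈ closedBall 0 R, f x ≤ M)
    (hfK : LipschitzOnWith K f (closedBall 0 R)) {x y : Fin N → EuclideanSpace ℝ (Fin d)}
    (hx : ∀ i, x i ∈ closedBall 0 R) (hy : ∀ i, y i ∈ closedBall 0 R)
    (hxy : ∀ i, ‖x i - y i‖ ≤ D) :
    ‖weightedAvg α f x - weightedAvg α f y‖ ≤ gibbsLipschitzConst α M R K * D := by
  rw [weightedAvg_eq_gibbsMean, weightedAvg_eq_gibbsMean]
  exact norm_gibbsMean_sub_le hα hf hf0 hfM hfK (by fun_prop) (by fun_prop) (.of_forall hx)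
    (.of_forall hy) (.of_forall hxy)

noncomputable def personalBestMeasure (t : ℝ) : Measure ℝ :=
  if t = 0 then Measure.dirac 0 else volume.restrict (Ioc 0 t)

instance : IsFiniteMeasure (personalBestMeasure t) := by
  unfold personalBestMeasure
  split_ifs
  · infer_instance
  · exact isFiniteMeasure_restrict.2 measure_Ioc_lt_top.ne

theorem personalBestMeasure_neZero (ht : 0 ≤ t) : NeZero (personalBestMeasure t) := by
  unfold personalBestMeasure
  split_ifs with h0
  · infer_instance
  · refine ⟨fun h => ?_⟩
    rw [Measure.restrict_eq_zero, Real.volume_Ioc, ENNReal.ofReal_eq_zero] at h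
    exact h0 (by linarith)

theorem ae_personalBestMeasure {P : ℝ → Prop} (hP : ∀ s ∈ Icc 0 t, P s) :
    ∀ᵐ s ∂personalBestMeasure t, P s := by
  unfold personalBestMeasure
  split_ifs with h0
  · rw [ae_dirac_eq]
    exact hP 0 ⟨le_rfl, h0.ge⟩
  · exact ae_restrict_of_forall_mem measurableSet_Ioc fun s hs => hP s (Ioc_subset_Icc_self hs)

theorem ContinuousOn.aestronglyMeasurable_personalBestMeasure {g : ℝ → EuclideanSpace ℝ (Fin d)}
    (hg : ContinuousOn g (Icc 0 t)) : AEStronglyMeasurable g (personalBestMeasure t) := by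
  unfold personalBestMeasure
  split_ifs
  · exact aestronglyMeasurable_dirac
  · exact (hg.mono Ioc_subset_Icc_self).aestronglyMeasurable measurableSet_Ioc

theorem personalBest_eq_gibbsMean (ht : 0 ≤ t) (g : ℝ → EuclideanSpace ℝ (Fin d)) :
    personalBest β f g t = gibbsMean (personalBestMeasure t) β f g := by
  unfold personalBest personalBestMeasure gibbsMean
  split_ifs
  · rw [integral_dirac, integral_dirac, inv_smul_smul₀ (exp_pos _).ne']
  · rw [intervalIntegral.integral_of_le ht, intervalIntegral.integral_of_le ht]

theorem personalBest_mem_closedBall (hβ : 0 ≤ β) (hf : Continuous f)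
    (hf0 : ∀ x ∈ closedBall 0 R, 0 ≤ f x) (ht : 0 ≤ t) {g : ℝ → EuclideanSpace ℝ (Fin d)}
    (hg : ContinuousOn g (Icc 0 t)) (hgR : ∀ s ∈ Icc 0 t, g s ∈ closedBall 0 R) :
    personalBest β f g t ∈ closedBall 0 R := by
  have := personalBestMeasure_neZero ht
  rw [personalBest_eq_gibbsMean ht]
  exact gibbsMean_mem_closedBall hβ hf hf0 hg.aestronglyMeasurable_personalBestMeasure
    (ae_personalBestMeasure hgR)

theorem norm_personalBest_sub_le {D : ℝ} (hβ : 0 ≤ β) (hf : Continuous f)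
    (hf0 : ∀ x ∈ closedBall 0 R, 0 ≤ f x) (hfM : ∀ x ∈ closedBall 0 R, f x ≤ M)
    (hfK : LipschitzOnWith K f (closedBall 0 R)) (ht : 0 ≤ t) {g h : ℝ → EuclideanSpace ℝ (Fin d)}
    (hg : ContinuousOn g (Icc 0 t)) (hh : ContinuousOn h (Icc 0 t))
    (hgR : ∀ s ∈ Icc 0 t, g s ∈ closedBall 0 R) (hhR : ∀ s ∈ Icc 0 t, h s ∈ closedBall 0 R)
    (hgh : ∀ s ∈ Icc 0 t, ‖g s - h s‖ ≤ D) :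
    ‖personalBest β f g t - personalBest β f h t‖ ≤ gibbsLipschitzConst β M R K * D := by
  have := personalBestMeasure_neZero ht
  rw [personalBest_eq_gibbsMean ht, personalBest_eq_gibbsMean ht]
  exact norm_gibbsMean_sub_le hβ hf hf0 hfM hfK hg.aestronglyMeasurable_personalBestMeasure
    hh.aestronglyMeasurable_personalBestMeasure (ae_personalBestMeasure hgR)
    (ae_personalBestMeasure hhR) (ae_personalBestMeasure hgh)

end Averages

theorem nonneg_of_forall_abs_sub_le_mul {H : ℝ → ℝ} {c : ℝ}
    (hH : ∀ y z, |H y - H z| ≤ c * |y - z|) : 0 ≤ c := by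
  simpa using (abs_nonneg _).trans (hH 1 0)

section Drift

variable {E : Type*} [NormedAddCommGroup E] [NormedSpace ℝ E] {H : ℝ → ℝ} {c R : ℝ} {K : ℝ≥0}
  {f : E → ℝ}

noncomputable def consensusDrift (H : ℝ → ℝ) (f : E → ℝ) (x v p : E) : E :=
  -(H (f x - f v) * H (f p - f v)) • (x - v) - (H (f x - f p) * H (f v - f p)) • (x - p)

theorem driftB_eq_consensusDrift {d N : ℕ} (α β : ℝ) (f : EuclideanSpace ℝ (Fin d) → ℝ)
    (He : ℝ → ℝ) (i : Fin N) (t : ℝ) (φ : ℝ → Fin N → EuclideanSpace ℝ (Fin d)) :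
    driftB α β f He i t φ =
      consensusDrift He f (φ t i) (weightedAvg α f (φ t)) (personalBest β f (fun s => φ s i) t) :=
  rfl

theorem norm_coeff_smul_sub_le (hH1 : ∀ y, |H y| ≤ 1) (hH : ∀ y z, |H y - H z| ≤ c * |y - z|)
    (hf : LipschitzOnWith K f (closedBall 0 R)) {x y z x' y' z' : E}
    (hx : x ∈ closedBall 0 R) (hy : y ∈ closedBall 0 R) (hz : z ∈ closedBall 0 R)
    (hx' : x' ∈ closedBall 0 R) (hy' : y' ∈ closedBall 0 R) (hz' : z' ∈ closedBall 0 R) :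
    ‖(H (f x - f y) * H (f z - f y)) • (x - y) - (H (f x' - f y') * H (f z' - f y')) • (x' - y')‖ ≤
      c * K * (‖x - x'‖ + 2 * ‖y - y'‖ + ‖z - z'‖) * (2 * R) + (‖x - x'‖ + ‖y - y'‖) := by
  have hc := nonneg_of_forall_abs_sub_le_mul hH
  have hfd : ∀ {u u' : E}, u ∈ closedBall (0 : E) R → u' ∈ closedBall (0 : E) R →
      |f u - f u'| ≤ K * ‖u - u'‖ := fun hu hu' => by
    rw [← Real.dist_eq, ← dist_eq_norm]
    exact hf.dist_le_mul _ hu _ hu'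
  have hgap : ∀ {u w u' w' : E}, u ∈ closedBall (0 : E) R → w ∈ closedBall (0 : E) R →
      u' ∈ closedBall (0 : E) R → w' ∈ closedBall (0 : E) R →
      |H (f u - f w) - H (f u' - f w')| ≤ c * K * (‖u - u'‖ + ‖w - w'‖) :=
    fun {u w u' w'} hu hw hu' hw' => by
    calc |H (f u - f w) - H (f u' - f w')| ≤ c * |(f u - f u') - (f w - f w')| := by
          rw [sub_sub_sub_comm]; exact hH _ _
      _ ≤ c * (K * ‖u - u'‖ + K * ‖w - w'‖) := by
          gcongr
          exact (abs_sub _ _).trans (add_le_add (hfd hu hu') (hfd hw hw'))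
      _ = c * K * (‖u - u'‖ + ‖w - w'‖) := by ring
  have hcoeff : |H (f x - f y) * H (f z - f y) - H (f x' - f y') * H (f z' - f y')| ≤
      c * K * (‖x - x'‖ + 2 * ‖y - y'‖ + ‖z - z'‖) := by
    refine (abs_mul_sub_mul_le (hH1 _) (hH1 _)).trans ?_
    linarith [hgap hx hy hx' hy', hgap hz hy hz' hy']
  have hxy : ‖x - y‖ ≤ 2 * R := by
    rw [mem_closedBall_zero_iff] at hx hy
    linarith [norm_sub_le x y]
  have hdiff : ‖(x - y) - (x' - y')‖ ≤ ‖x - x'‖ + ‖y - y'‖ := by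
    rw [sub_sub_sub_comm]; exact norm_sub_le _ _
  have hbound : |H (f x' - f y') * H (f z' - f y')| ≤ 1 := by
    rw [abs_mul]; exact mul_le_one₀ (hH1 _) (abs_nonneg _) (hH1 _)
  calc _ ≤ |H (f x - f y) * H (f z - f y) - H (f x' - f y') * H (f z' - f y')| * ‖x - y‖ +
        |H (f x' - f y') * H (f z' - f y')| * ‖(x - y) - (x' - y')‖ := norm_smul_sub_smul_le _ _ _ _
    _ ≤ c * K * (‖x - x'‖ + 2 * ‖y - y'‖ + ‖z - z'‖) * (2 * R) + 1 * (‖x - x'‖ + ‖y - y'‖) := by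
        gcongr
    _ = _ := by rw [one_mul]

theorem norm_consensusDrift_sub_le (hH1 : ∀ y, |H y| ≤ 1)
    (hH : ∀ y z, |H y - H z| ≤ c * |y - z|) (hf : LipschitzOnWith K f (closedBall 0 R))
    {x v p x' v' p' : E} (hx : x ∈ closedBall 0 R) (hv : v ∈ closedBall 0 R)
    (hp : p ∈ closedBall 0 R) (hx' : x' ∈ closedBall 0 R) (hv' : v' ∈ closedBall 0 R)
    (hp' : p' ∈ closedBall 0 R) :
    ‖consensusDrift H f x v p - consensusDrift H f x' v' p'‖ ≤
      (2 + 6 * c * K * R) * (‖x - x'‖ + ‖v - v'‖ + ‖p - p'‖) := by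
  have hc := nonneg_of_forall_abs_sub_le_mul hH
  have hR : 0 ≤ R := (norm_nonneg x).trans (mem_closedBall_zero_iff.1 hx)
  have hlam := norm_coeff_smul_sub_le hH1 hH hf hx hv hp hx' hv' hp'
  have hmu := norm_coeff_smul_sub_le hH1 hH hf hx hp hv hx' hp' hv'
  have hx0 : 0 ≤ c * K * R * ‖x - x'‖ := by positivity
  have hsplit : ∀ a b a' b' : E, -a - b - (-a' - b') = -((a - a') + (b - b')) := fun _ _ _ _ => by
    abel
  unfold consensusDrift
  rw [neg_smul, neg_smul, hsplit, norm_neg]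
  refine (norm_add_le _ _).trans ?_
  linear_combination hlam + hmu + 2 * hx0 + norm_nonneg (v - v') + norm_nonneg (p - p')

end Drift

theorem norm_driftB_sub_le {d N : ℕ} [NeZero N] {α β c R M t D : ℝ} {K : ℝ≥0}
    {f : EuclideanSpace ℝ (Fin d) → ℝ} {He : ℝ → ℝ} (hα : 0 ≤ α) (hβ : 0 ≤ β)
    (hf : Continuous f) (hf0 : ∀ x ∈ closedBall 0 R, 0 ≤ f x)
    (hfM : ∀ x ∈ closedBall 0 R, f x ≤ M) (hfK : LipschitzOnWith K f (closedBall 0 R))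
    (hH1 : ∀ y, |He y| ≤ 1) (hH : ∀ y z, |He y - He z| ≤ c * |y - z|) (ht : 0 ≤ t)
    {φ ψ : ℝ → Fin N → EuclideanSpace ℝ (Fin d)} (hφ : ContinuousOn φ (Icc 0 t))
    (hψ : ContinuousOn ψ (Icc 0 t)) (hφR : ∀ s ∈ Icc 0 t, ∀ i, φ s i ∈ closedBall 0 R)
    (hψR : ∀ s ∈ Icc 0 t, ∀ i, ψ s i ∈ closedBall 0 R)
    (hD : ∀ s ∈ Icc 0 t, ∀ i, ‖φ s i - ψ s i‖ ≤ D) (i : Fin N) :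
    ‖driftB α β f He i t φ - driftB α β f He i t ψ‖ ≤
      (2 + 6 * c * K * R) * (1 + gibbsLipschitzConst α M R K + gibbsLipschitzConst β M R K) *
        D := by
  have htt : t ∈ Icc 0 t := ⟨ht, le_rfl⟩
  have hφi : ContinuousOn (fun s => φ s i) (Icc 0 t) := (continuous_apply i).comp_continuousOn hφ
  have hψi : ContinuousOn (fun s => ψ s i) (Icc 0 t) := (continuous_apply i).comp_continuousOn hψ
  rw [driftB_eq_consensusDrift, driftB_eq_consensusDrift]
  calc _ ≤ (2 + 6 * c * K * R) * (‖φ t i - ψ t i‖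
          + ‖weightedAvg α f (φ t) - weightedAvg α f (ψ t)‖
          + ‖personalBest β f (fun s => φ s i) t - personalBest β f (fun s => ψ s i) t‖) :=
        norm_consensusDrift_sub_le hH1 hH hfK (hφR t htt i)
          (weightedAvg_mem_closedBall hα hf hf0 (hφR t htt))
          (personalBest_mem_closedBall hβ hf hf0 ht hφi fun s hs => hφR s hs i)
          (hψR t htt i) (weightedAvg_mem_closedBall hα hf hf0 (hψR t htt))
          (personalBest_mem_closedBall hβ hf hf0 ht hψi fun s hs => hψR s hs i)
    _ ≤ (2 + 6 * c * K * R) *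
          (D + gibbsLipschitzConst α M R K * D + gibbsLipschitzConst β M R K * D) := by
        have hc := nonneg_of_forall_abs_sub_le_mul hH
        have hR : 0 ≤ R := (norm_nonneg _).trans (mem_closedBall_zero_iff.1 (hφR t htt i))
        gcongr
        · exact hD t htt i
        · exact norm_weightedAvg_sub_le hα hf hf0 hfM hfK (hφR t htt) (hψR t htt) (hD t htt)
        · exact norm_personalBest_sub_le hβ hf hf0 hfM hfK ht hφi hψi
            (fun s hs => hφR s hs i) (fun s hs => hψR s hs i) (fun s hs => hD s hs i)
    _ = _ := by ring

theorem LipschitzOnWith.le_apply_zero_add_mul {E : Type*} [SeminormedAddCommGroup E] {f : E → ℝ}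
    {K : ℝ≥0} {R : ℝ} (hf : LipschitzOnWith K f (closedBall 0 R)) {x : E}
    (hx : x ∈ closedBall 0 R) : f x ≤ f 0 + K * R := by
  have hxR := mem_closedBall_zero_iff.1 hx
  have h := hf.dist_le_mul x hx 0 (mem_closedBall_self ((norm_nonneg x).trans hxR))
  rw [Real.dist_eq, dist_zero_right] at h
  linarith [le_abs_self (f x - f 0), mul_le_mul_of_nonneg_left hxR K.coe_nonneg]

section Paths

variable {ι E : Type*} [Fintype ι] [SeminormedAddCommGroup E]

theorem norm_le_sqrt_sum_norm_sq (x : ι → E) (i : ι) : ‖x i‖ ≤ √(∑ j, ‖x j‖ ^ 2) :=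
  le_sqrt_of_sq_le (Finset.single_le_sum (f := fun j => ‖x j‖ ^ 2) (fun j _ => by positivity)
    (Finset.mem_univ i))

theorem sqrt_sum_norm_sq_le {x : ι → E} {c : ℝ} (hc : 0 ≤ c) (hx : ∀ i, ‖x i‖ ≤ c) :
    √(∑ i, ‖x i‖ ^ 2) ≤ √(Fintype.card ι) * c := by
  calc √(∑ i, ‖x i‖ ^ 2) ≤ √(∑ _i : ι, c ^ 2) :=
        sqrt_le_sqrt (Finset.sum_le_sum fun i _ => pow_le_pow_left₀ (norm_nonneg _) (hx i) 2)
    _ = √(Fintype.card ι) * c := by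
        rw [Finset.sum_const, Finset.card_univ, nsmul_eq_mul, sqrt_mul (Nat.cast_nonneg _),
          sqrt_sq hc]

theorem norm_apply_le_iSup_sqrt_sum {φ : ℝ → ι → E} {t s : ℝ} (hφ : ContinuousOn φ (Ici 0))
    (hs : s ∈ Icc 0 t) (i : ι) :
    ‖φ s i‖ ≤ ⨆ u : Icc (0 : ℝ) t, √(∑ j, ‖φ u.1 j‖ ^ 2) := by
  have hF : ContinuousOn (fun u => √(∑ j, ‖φ u j‖ ^ 2)) (Icc 0 t) := by
    have : ContinuousOn φ (Icc 0 t) := hφ.mono Icc_subset_Ici_self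
    fun_prop
  have hbdd : BddAbove (range fun u : Icc (0 : ℝ) t => √(∑ j, ‖φ u.1 j‖ ^ 2)) := by
    simpa only [image_eq_range] using (isCompact_Icc.image_of_continuousOn hF).bddAbove
  exact (norm_le_sqrt_sum_norm_sq (φ s) i).trans (le_ciSup hbdd ⟨s, hs⟩)

end Paths

theorem stmt_9_general (d N : ℕ) (hN : 1 ≤ N)
    (α β ε C : ℝ) (hα : 0 < α) (hβ : 0 < β) (hε : 0 < ε) (hC : 0 < C)
    (f : EuclideanSpace ℝ (Fin d) → ℝ) (hf : Continuous f) (hfpos : ∀ x, 0 ≤ f x)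
    (Lf : ℝ → ℝ)
    (hfLip : ∀ n : ℝ, 0 < n → ∀ x y : EuclideanSpace ℝ (Fin d), ‖x‖ ≤ n → ‖y‖ ≤ n →
      |f x - f y| ≤ Lf n * ‖x - y‖)
    (He : ℝ → ℝ) (hHe01 : ∀ x, 0 ≤ He x ∧ He x ≤ 1)
    (hHeLip : ∀ x y : ℝ, |He x - He y| ≤ (C / ε) * |x - y|) :
    ∀ R : ℝ, 0 < R → ∃ L > 0, ∀ t : ℝ, 0 ≤ t →
      ∀ (φ ψ : ℝ → Fin N → EuclideanSpace ℝ (Fin d)),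
      ContinuousOn φ (Set.Ici 0) → ContinuousOn ψ (Set.Ici 0) →
      (⨆ s : Set.Icc (0:ℝ) t, Real.sqrt (∑ i, ‖φ s.1 i‖ ^ 2)) ≤ R →
      (⨆ s : Set.Icc (0:ℝ) t, Real.sqrt (∑ i, ‖ψ s.1 i‖ ^ 2)) ≤ R →
      Real.sqrt (∑ i, ‖driftB α β f He i t φ - driftB α β f He i t ψ‖ ^ 2) ≤
        L * ⨆ s : Set.Icc (0:ℝ) t, Real.sqrt (∑ i, ‖φ s.1 i - ψ s.1 i‖ ^ 2) := by
  intro R hR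
  have : NeZero N := ⟨by omega⟩
  set K := (Lf R).toNNReal
  have hfK : LipschitzOnWith K f (closedBall 0 R) := .of_dist_le_mul fun x hx y hy => by
    rw [Real.dist_eq, dist_eq_norm]
    exact (hfLip R hR x y (mem_closedBall_zero_iff.1 hx) (mem_closedBall_zero_iff.1 hy)).trans
      (mul_le_mul_of_nonneg_right (le_coe_toNNReal _) (norm_nonneg _))
  set M := f 0 + K * R
  set L₀ := (2 + 6 * (C / ε) * K * R) *
    (1 + gibbsLipschitzConst α M R K + gibbsLipschitzConst β M R K)
  have hL₀ : 0 < L₀ := by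
    have := gibbsLipschitzConst_nonneg (M := M) (K := K) hα.le hR.le
    have := gibbsLipschitzConst_nonneg (M := M) (K := K) hβ.le hR.le
    positivity
  refine ⟨√N * L₀, by positivity, fun t ht φ ψ hφ hψ hφR hψR => ?_⟩
  set D := ⨆ s : Icc (0 : ℝ) t, √(∑ i, ‖φ s.1 i - ψ s.1 i‖ ^ 2)
  have hφB : ∀ s ∈ Icc 0 t, ∀ i, φ s i ∈ closedBall 0 R := fun s hs i =>
    mem_closedBall_zero_iff.2 ((norm_apply_le_iSup_sqrt_sum hφ hs i).trans hφR)
  have hψB : ∀ s ∈ Icc 0 t, ∀ i, ψ s i ∈ closedBall 0 R := fun s hs i =>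
    mem_closedBall_zero_iff.2 ((norm_apply_le_iSup_sqrt_sum hψ hs i).trans hψR)
  have hD : ∀ s ∈ Icc 0 t, ∀ i, ‖φ s i - ψ s i‖ ≤ D := fun s hs i =>
    norm_apply_le_iSup_sqrt_sum (hφ.sub hψ) hs i
  have hblock : ∀ i, ‖driftB α β f He i t φ - driftB α β f He i t ψ‖ ≤ L₀ * D :=
    norm_driftB_sub_le hα.le hβ.le hf (fun x _ => hfpos x)
      (fun x hx => hfK.le_apply_zero_add_mul hx) hfK
      (fun y => abs_le.2 ⟨by linarith [(hHe01 y).1], (hHe01 y).2⟩) hHeLip ht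
      (hφ.mono Icc_subset_Ici_self) (hψ.mono Icc_subset_Ici_self) hφB hψB hD
  calc √(∑ i, ‖driftB α β f He i t φ - driftB α β f He i t ψ‖ ^ 2)
      ≤ √(Fintype.card (Fin N)) * (L₀ * D) :=
        sqrt_sum_norm_sq_le (mul_nonneg hL₀.le ((norm_nonneg _).trans (hD t ⟨ht, le_rfl⟩ 0))) hblock
    _ = √N * L₀ * D := by rw [Fintype.card_fin]; ring

theorem stmt_9 (d N : ℕ) (hd : 1 ≤ d) (hN : 1 ≤ N)
    (α β ε C : ℝ) (hα : 0 < α) (hβ : 0 < β) (hε : 0 < ε) (hC : 0 < C)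
    (f : EuclideanSpace ℝ (Fin d) → ℝ) (hf : Continuous f) (hfpos : ∀ x, 0 ≤ f x)
    (Lf : ℝ → ℝ)
    (hfLip : ∀ n : ℝ, 0 < n → ∀ x y : EuclideanSpace ℝ (Fin d), ‖x‖ ≤ n → ‖y‖ ≤ n →
      |f x - f y| ≤ Lf n * ‖x - y‖)
    (He : ℝ → ℝ) (hHe01 : ∀ x, 0 ≤ He x ∧ He x ≤ 1)
    (hHeLip : ∀ x y : ℝ, |He x - He y| ≤ (C / ε) * |x - y|) :
    ∀ R : ℝ, 0 < R → ∃ L > 0, ∀ t : ℝ, 0 ≤ t →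
      ∀ (φ ψ : ℝ → Fin N → EuclideanSpace ℝ (Fin d)),
      ContinuousOn φ (Set.Ici 0) → ContinuousOn ψ (Set.Ici 0) →
      (⨆ s : Set.Icc (0:ℝ) t, Real.sqrt (∑ i, ‖φ s.1 i‖ ^ 2)) ≤ R →
      (⨆ s : Set.Icc (0:ℝ) t, Real.sqrt (∑ i, ‖ψ s.1 i‖ ^ 2)) ≤ R →
      Real.sqrt (∑ i, ‖driftB α β f He i t φ - driftB α β f He i t ψ‖ ^ 2) ≤
        L * ⨆ s : Set.Icc (0:ℝ) t, Real.sqrt (∑ i, ‖φ s.1 i - ψ s.1 i‖ ^ 2) :=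
  stmt_9_general d N hN α β ε C hα hβ hε hC f hf hfpos Lf hfLip He hHe01 hHeLip
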